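/- Let p(x) = Π_{j=1}^n (x−x_j) with coefficients c = (c_n,...,c_0)^T reversed, and suppose c_n = 1. Define X_k as the power sums of the x_j (X_0 = K). Then X = K·e_1 − T(c)^{-1} Λ c, where X = (X_0,...,X_K)^T, c ∈ R^{K+1} is the zero-padded reversed coefficient vector, Λ = diag(0,...,K), and e_1 is the first standard basis vector. -/

import Mathlib

/-!
Put `w = K e₁ - X`; the claim is `T(c) w = Λ c`, and `T(c)` is unitriangular, hence invertible.
By Vieta the reversed coefficients are `c_m = (-1)^m e_m(x)` (also for `m > n`, where both sides
vanish). As `w₀ = K - X₀ = 0`, row `i` of `T(c) w` is `-∑_{a<i} c_a X_{i-a}`, and Newton's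
identities say exactly that this equals `i c_i`.
-/

open Matrix Finset

/-- Lower triangular Toeplitz matrix generated by a vector. -/
def LTT {n : ℕ} (x : Fin n → ℝ) : Matrix (Fin n) (Fin n) ℝ :=
  Matrix.of fun i j =>
    if h : (j : ℕ) ≤ (i : ℕ) then
      x ⟨(i : ℕ) - (j : ℕ), Nat.lt_of_le_of_lt (Nat.sub_le _ _) i.isLt⟩
    else 0

/-- The diagonal matrix diag(0,1,...,n-1). -/
def Lam (n : ℕ) : Matrix (Fin n) (Fin n) ℝ :=
  Matrix.diagonal fun i => (i : ℝ)

namespace Polynomial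

theorem coeff_reverse_eq_ite {R : Type*} [Semiring R] (p : R[X]) (i : ℕ) :
    p.reverse.coeff i = if i ≤ p.natDegree then p.coeff (p.natDegree - i) else 0 := by
  rw [coeff_reverse]
  split_ifs with h
  · rw [revAt_le h]
  · rw [revAt_eq_self_of_lt (not_le.mp h)]
    exact coeff_eq_zero_of_natDegree_lt (not_le.mp h)

theorem coeff_reverse_prod_X_sub_C {R σ : Type*} [CommRing R] [Nontrivial R] [Fintype σ]
    (x : σ → R) (m : ℕ) :
    (∏ j, (X - C (x j))).reverse.coeff m = (-1) ^ m * (univ.val.map x).esymm m := by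
  rw [coeff_reverse_eq_ite, natDegree_finsetProd_X_sub_C_eq_card, card_univ]
  split_ifs with h
  · have hvieta := Multiset.prod_X_sub_C_coeff (univ.val.map x) (k := Fintype.card σ - m)
      (by simp)
    rwa [Multiset.map_map, Multiset.card_map, card_val, card_univ, Nat.sub_sub_self h] at hvieta
  · rw [Multiset.esymm, Multiset.powersetCard_eq_empty _ (by simpa using h)]
    simp

end Polynomial

theorem sum_antidiagonal_esymm_mul_psum {R σ : Type*} [CommRing R] [Fintype σ] (x : σ → R)
    (k : ℕ) :
    ∑ a ∈ antidiagonal k with a.1 < k,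
      (-1) ^ a.1 * (univ.val.map x).esymm a.1 * ∑ j, x j ^ a.2
      = -(k * ((-1) ^ k * (univ.val.map x).esymm k)) := by
  have h := congrArg (MvPolynomial.aeval x) (MvPolynomial.mul_esymm_eq_sum σ R k)
  simp only [map_mul, map_sum, map_pow, map_neg, map_one, map_natCast,
    MvPolynomial.aeval_esymm_eq_multiset_esymm, MvPolynomial.psum, MvPolynomial.aeval_X] at h
  rw [mul_left_comm, h, ← mul_assoc, ← pow_add, show k + (k + 1) = 2 * k + 1 by ring,
    pow_succ, pow_mul]
  simp

theorem sum_antidiagonal_esymm_mul_neg_psum {R σ : Type*} [CommRing R] [Fintype σ] (x : σ → R)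
    (k : ℕ) :
    ∑ a ∈ antidiagonal k, (-1) ^ a.1 * (univ.val.map x).esymm a.1 *
      (if a.2 = 0 then 0 else -∑ j, x j ^ a.2)
      = k * ((-1) ^ k * (univ.val.map x).esymm k) := by
  rw [← neg_neg (_ * _), ← sum_antidiagonal_esymm_mul_psum, sum_filter, ← sum_neg_distrib]
  refine sum_congr rfl fun a ha => ?_
  have hk : a.1 < k ↔ a.2 ≠ 0 := by rw [HasAntidiagonal.mem_antidiagonal] at ha; omega
  by_cases h : a.2 = 0 <;> simp [h, hk]

section ToeplitzMatrix

variable {m : ℕ}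

theorem LTT_mulVec_apply (f g : ℕ → ℝ) (i : Fin m) :
    (LTT (fun k => f k) *ᵥ fun j => g j) i = ∑ a ∈ antidiagonal (i : ℕ), f a.1 * g a.2 := by
  have hrange : (range m).filter (· ≤ (i : ℕ)) = range (i + 1) := by
    ext j; simp only [mem_filter, mem_range]; omega
  simp only [mulVec, dotProduct, LTT, of_apply, dite_eq_ite, ite_mul, zero_mul]
  rw [Fin.sum_univ_eq_sum_range (fun j => if j ≤ (i : ℕ) then f (i - j) * g j else 0),
    ← sum_filter, hrange, ← Nat.sum_antidiagonal_swap]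
  exact (Nat.sum_antidiagonal_eq_sum_range_succ (fun a b => f b * g a) i).symm

theorem det_LTT (c : Fin (m + 1) → ℝ) : (LTT c).det = c 0 ^ (m + 1) := by
  rw [det_of_isLowerTriangular _ fun i j hij => dif_neg (not_le.mpr hij)]
  simp [LTT]

theorem LTT_inv_mulVec_of_mulVec_eq {c w v : Fin (m + 1) → ℝ} (hc : c 0 ≠ 0)
    (h : LTT c *ᵥ w = v) : (LTT c)⁻¹ *ᵥ v = w := by
  have hu : IsUnit (LTT c).det := by rw [det_LTT]; exact (pow_ne_zero _ hc).isUnit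
  rw [← h, mulVec_mulVec, nonsing_inv_mul _ hu, one_mulVec]

theorem Lam_mulVec_apply (v : Fin m → ℝ) (i : Fin m) : (Lam m *ᵥ v) i = i * v i :=
  mulVec_diagonal _ _ _

end ToeplitzMatrix

open Polynomial in
theorem ite_coeff_sub_eq_neg_one_pow_mul_esymm {R : Type*} [CommRing R] [IsDomain R] [Infinite R]
    {n : ℕ} (x : Fin n → R) (cc : ℕ → R)
    (hp : ∀ t : R, ∏ j, (t - x j) = ∑ i ∈ range (n + 1), cc i * t ^ i) (i : ℕ) :
    (if i ≤ n then cc (n - i) else 0) = (-1) ^ i * (univ.val.map x).esymm i := by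
  have hpoly : ∏ j, (X - C (x j)) = ∑ i ∈ range (n + 1), C (cc i) * X ^ i :=
    Polynomial.funext fun t => by simp [eval_prod, eval_finsetSum, hp t]
  rw [← coeff_reverse_prod_X_sub_C, coeff_reverse_eq_ite, natDegree_finsetProd_X_sub_C_eq_card,
    card_univ, Fintype.card_fin]
  split_ifs with hi
  · simp [hpoly, finsetSum_coeff, Nat.lt_succ_of_le (Nat.sub_le n i)]
  · rfl

theorem powerSums_from_coeffs {n : ℕ} (x : Fin n → ℝ) (cc : ℕ → ℝ)
    (hp : ∀ t : ℝ, ∏ j, (t - x j) = ∑ i ∈ Finset.range (n + 1), cc i * t ^ i)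
    (c : Fin (2 * n + 1) → ℝ)
    (hc : ∀ i : Fin (2 * n + 1), c i = if (i : ℕ) ≤ n then cc (n - (i : ℕ)) else 0)
    (X : Fin (2 * n + 1) → ℝ)
    (hX0 : X 0 = (2 * n : ℝ))
    (hXk : ∀ k : Fin (2 * n + 1), (k : ℕ) ≠ 0 → X k = ∑ j, x j ^ (k : ℕ)) :
    X = (2 * n : ℝ) • (Pi.single 0 1 : Fin (2 * n + 1) → ℝ) - (LTT c)⁻¹ *ᵥ (Lam (2 * n + 1) *ᵥ c) := by
  set e : ℕ → ℝ := fun m => (-1) ^ m * (univ.val.map x).esymm m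
  have hce : c = fun i : Fin (2 * n + 1) => e i := by
    funext i
    rw [hc, ite_coeff_sub_eq_neg_one_pow_mul_esymm x cc hp]
  set g : ℕ → ℝ := fun b => if b = 0 then 0 else -∑ k, x k ^ b
  have hw : (2 * n : ℝ) • Pi.single 0 1 - X = fun j : Fin (2 * n + 1) => g j := by
    funext j
    by_cases hj : (j : ℕ) = 0
    · obtain rfl : j = 0 := Fin.ext hj
      simp [g, hX0]
    · simp [g, hj, hXk j hj, Fin.ext_iff]
  have hToeplitz : LTT c *ᵥ ((2 * n : ℝ) • Pi.single 0 1 - X) = Lam (2 * n + 1) *ᵥ c := by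
    funext i
    rw [hw, hce, LTT_mulVec_apply, Lam_mulVec_apply]
    exact sum_antidiagonal_esymm_mul_neg_psum x i
  rw [LTT_inv_mulVec_of_mulVec_eq (by simp [hce, e, Multiset.esymm]) hToeplitz, sub_sub_cancel]
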